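/- Let X be a compact metric space and G a semigroup of self-maps with the property (Montel-type) that any open set on which G omits at least q distinct points of X is contained in the Fatou set F(G). Then the Julia set J(G) is the smallest closed backward invariant set containing at least q points, i.e., if E ⊆ X is closed, backward invariant under every g ∈ G, and has at least q points, then J(G) ⊆ E. -/

import Mathlib

def FatouSet {X : Type*} [MetricSpace X] (G : Set (X → X)) : Set X :=
  {x | ∃ U : Set X, IsOpen U ∧ x ∈ U ∧ EquicontinuousOn (fun g : G => (g : X → X)) U}

def JuliaSet {X : Type*} [MetricSpace X] (G : Set (X → X)) : Set X :=
  (FatouSet G)ᶜ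

theorem Set.mapsTo_compl_of_preimage_subset {X : Type*} {g : X → X} {E : Set X}
    (h : g ⁻¹' E ⊆ E) : Set.MapsTo g Eᶜ Eᶜ :=
  fun _ hz hgz => hz (h hgz)

theorem compl_subset_fatouSet {X : Type*} [MetricSpace X] {G : Set (X → X)} {q : ℕ}
    (hMontel : ∀ U : Set X, IsOpen U → ∀ P : Finset X, q ≤ P.card →
      (∀ g ∈ G, ∀ z ∈ U, g z ∉ (P : Set X)) → U ⊆ FatouSet G)
    {E : Set X} (hE : IsClosed E) (hinv : ∀ g ∈ G, g ⁻¹' E ⊆ E)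
    {P : Finset X} (hPE : (P : Set X) ⊆ E) (hPq : q ≤ P.card) : Eᶜ ⊆ FatouSet G :=
  hMontel Eᶜ hE.isOpen_compl P hPq fun g hg _ hz hgz =>
    Set.mapsTo_compl_of_preimage_subset (hinv g hg) hz (hPE hgz)

theorem stmt4_general {X : Type*} [MetricSpace X] (G : Set (X → X)) (q : ℕ)
    -- Montel-type property: an open set on which all maps of `G` omit at least
    -- `q` distinct points lies in the Fatou set.
    (hMontel : ∀ U : Set X, IsOpen U → ∀ P : Finset X, q ≤ P.card →
      (∀ g ∈ G, ∀ z ∈ U, g z ∉ (P : Set X)) → U ⊆ FatouSet G) :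
    -- `J(G)` is contained in every closed backward invariant set with at least `q` points.
    ∀ E : Set X, IsClosed E → (∀ g ∈ G, g ⁻¹' E ⊆ E) →
      (∃ P : Finset X, (P : Set X) ⊆ E ∧ q ≤ P.card) →
      JuliaSet G ⊆ E := by
  rintro E hE hinv ⟨P, hPE, hPq⟩
  exact Set.compl_subset_comm.mp (compl_subset_fatouSet hMontel hE hinv hPE hPq)

theorem stmt4 {X : Type*} [MetricSpace X] [CompactSpace X] (G : Set (X → X)) (q : ℕ)
    -- Montel-type property: an open set on which all maps of `G` omit at least
    -- `q` distinct points lies in the Fatou set.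
    (hMontel : ∀ U : Set X, IsOpen U → ∀ P : Finset X, q ≤ P.card →
      (∀ g ∈ G, ∀ z ∈ U, g z ∉ (P : Set X)) → U ⊆ FatouSet G) :
    -- `J(G)` is contained in every closed backward invariant set with at least `q` points.
    ∀ E : Set X, IsClosed E → (∀ g ∈ G, g ⁻¹' E ⊆ E) →
      (∃ P : Finset X, (P : Set X) ⊆ E ∧ q ≤ P.card) →
      JuliaSet G ⊆ E :=
  stmt4_general G q hMontel
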